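/- arXiv:1208.2481 — 2 statements merged into one kernel-verified Lean document; each statement's English description precedes it below -/
import Mathlib

section
/- Let (V,B) be a symmetric bilinear space over a finite field K of characteristic 2 with orthogonal decomposition V = R ⊥ (I ⊕ A), where R = Rad(V), I is totally isotropic (Q_B vanishes on I, where Q_B(v) = B(v,v)), and A is anisotropic of dimension ≤ 1. Then M := R + I is a maximal totally isotropic subspace of (V,B). -/
/-- over a finite field of characteristic 2, given a decomposition
`V = R ⊥ (I ⊕ A)` with `R` the radical, `I` totally isotropic for `Q_B(v) := B(v,v)`,
and `A` anisotropic of dimension ≤ 1, the subspace `M = R + I` is a maximal totally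
isotropic subspace of `(V,B)`. -/
theorem radical_plus_isotropic_maximal_char_two {K V : Type*} [Field K] [Finite K]
    [CharP K 2] [AddCommGroup V] [Module K V] [FiniteDimensional K V]
    (B : V →ₗ[K] V →ₗ[K] K) (hsymm : ∀ x y, B x y = B y x)
    (R I A : Submodule K V)
    -- R is the radical of V
    (hR : (R : Set V) = {v : V | ∀ w : V, B v w = 0})
    -- direct-sum decomposition V = R ⊥ (I ⊕ A)
    (hsup : R ⊔ I ⊔ A = ⊤)
    (hRind : R ⊓ (I ⊔ A) = ⊥) (hIA : I ⊓ A = ⊥)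
    -- I is totally isotropic for Q_B
    (hI : ∀ x ∈ I, B x x = 0)
    -- A is anisotropic of dimension ≤ 1
    (hA : ∀ a ∈ A, B a a = 0 → a = 0) (hAdim : Module.finrank K A ≤ 1) :
    (∀ x ∈ R ⊔ I, B x x = 0) ∧
    (∀ M' : Submodule K V, (∀ x ∈ M', B x x = 0) → R ⊔ I ≤ M' → M' = R ⊔ I) := by
  have h2 : (2 : K) = 0 := by exact_mod_cast CharP.cast_eq_zero K 2
  have key : ∀ x ∈ R ⊔ I, B x x = 0 := by
    intro x hx
    rcases Submodule.mem_sup.1 hx with ⟨r, hr, i, hi, rfl⟩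
    have hrrad : ∀ w : V, B r w = 0 := by
      have hr' : r ∈ (R : Set V) := hr
      rw [hR] at hr'
      exact hr'
    have expand : B (r + i) (r + i) = B r r + B r i + (B i r + B i i) := by
      simp [map_add]
      ring
    rw [expand, hrrad r, hrrad i, ← hsymm r i, hrrad i, hI i hi]
    ring
  refine ⟨key, ?_⟩
  intro M' hM' hle
  apply le_antisymm _ hle
  intro m hm
  have hmtop : m ∈ R ⊔ I ⊔ A := by rw [hsup]; trivial
  rcases Submodule.mem_sup.1 hmtop with ⟨x, hx, a, ha, rfl⟩
  have hQx : B x x = 0 := key x hx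
  have hm0 : B (x + a) (x + a) = 0 := hM' _ hm
  have expand : B (x + a) (x + a) = B x x + B a a + 2 * B x a := by
    simp [map_add]
    rw [hsymm a x]
    ring
  have hQa : B a a = 0 := by
    rw [expand, hQx, h2] at hm0
    simpa using hm0
  have ha0 : a = 0 := hA a ha hQa
  rw [ha0, add_zero]
  exact hx
end

section
/- Let L be an 𝔞-valued lattice in a non-degenerate symmetric bilinear space (V,H) over a number field F, and suppose L is not 𝔞-even at a prime 𝔭 with ramification index e_𝔭 := ord_𝔭(2) ≤ 1. Then the quotient L/L_{𝔞-even at 𝔭} is isomorphic to the residue field 𝔽_𝔭 = O_F/𝔭 as abelian groups; in particular it has order N(𝔭). -/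
/-!
Since `H(x₀,x₀) ∉ 𝔞𝔭` for some `x₀ ∈ L`, there is `u ∈ 𝔞⁻¹` with `u H(x₀,x₀) ∉ 𝔭`; such a `u`
generates `𝔞⁻¹` locally at `𝔭`, so `Q(x) = u H(x,x)` is an `𝓞_F`-valued quadratic form on `L`
with `Q(x) ∈ 𝔭 ↔ H(x,x) ∈ 𝔞𝔭`. Its polar form `2 u H(x,y)` vanishes mod `𝔭` because `2 ∈ 𝔭`,
so `Q mod 𝔭 : L → 𝔽_𝔭` is additive, and it satisfies `Q(e x) = e² Q(x)`. Squaring is bijective on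
the finite field `𝔽_𝔭` of characteristic `2`, so the values `e² Q(x₀)` exhaust `𝔽_𝔭`.
-/

set_option synthInstance.maxHeartbeats 400000
set_option maxHeartbeats 800000

open NumberField nonZeroDivisors Pointwise

variable {F V : Type*}

/-- The `𝔞`-dual lattice `L^{#𝔞} = {v ∈ V | B(v, L) ⊆ 𝔞}`. -/
def adual [Field F] [NumberField F] [AddCommGroup V] [Module F V]
    [Module (𝓞 F) V] [IsScalarTower (𝓞 F) F V]
    (B : V →ₗ[F] V →ₗ[F] F) (𝔞 : FractionalIdeal (𝓞 F)⁰ F)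
    (L : Submodule (𝓞 F) V) : Submodule (𝓞 F) V where
  carrier := {v | ∀ x ∈ L, B v x ∈ (𝔞 : Submodule (𝓞 F) F)}
  add_mem' := by
    intro a b ha hb x hx
    rw [map_add, LinearMap.add_apply]
    exact add_mem (ha x hx) (hb x hx)
  zero_mem' := by
    intro x hx
    simp
  smul_mem' := by
    intro c v hv x hx
    have h1 : B (c • v) x = c • B v x := by
      rw [← algebraMap_smul F c v, map_smul, LinearMap.smul_apply, algebraMap_smul]
    simp only [Set.mem_setOf_eq] at *
    rw [h1]
    exact Submodule.smul_mem _ c (hv x hx)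

/-- `L` is a lattice in `V`: finitely generated over `𝓞 F` and spanning `V` over `F`. -/
def IsLat [Field F] [NumberField F] [AddCommGroup V] [Module F V]
    [Module (𝓞 F) V] [IsScalarTower (𝓞 F) F V] (L : Submodule (𝓞 F) V) : Prop :=
  L.FG ∧ Submodule.span F (L : Set V) = ⊤

/-- Scaling a lattice by a fractional ideal: `𝔟L` is the smallest `𝓞 F`-submodule
containing all products `b • x` with `b ∈ 𝔟`, `x ∈ L`. -/
def fsmul [Field F] [NumberField F] [AddCommGroup V] [Module F V]
    [Module (𝓞 F) V] [IsScalarTower (𝓞 F) F V]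
    (𝔟 : FractionalIdeal (𝓞 F)⁰ F) (L : Submodule (𝓞 F) V) : Submodule (𝓞 F) V :=
  (((𝔟 : Submodule (𝓞 F) F) : Set F)) • L

namespace QuadraticMap

variable {R M : Type*} [CommRing R] [AddCommGroup M] [Module R M]

def toAddMonoidHomQuotient (Q : QuadraticMap R M R) (I : Ideal R)
    (hQ : ∀ x y, polar Q x y ∈ I) : M →+ R ⧸ I where
  toFun x := Ideal.Quotient.mk I (Q x)
  map_zero' := by simp
  map_add' x y := by
    rw [← sub_eq_zero, ← map_add, ← map_sub, Ideal.Quotient.eq_zero_iff_mem]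
    simpa [polar, sub_sub] using hQ x y

theorem toAddMonoidHomQuotient_apply (Q : QuadraticMap R M R) (I : Ideal R)
    (hQ : ∀ x y, polar Q x y ∈ I) (x : M) :
    Q.toAddMonoidHomQuotient I hQ x = Ideal.Quotient.mk I (Q x) := rfl

theorem toAddMonoidHomQuotient_surjective (Q : QuadraticMap R M R) {I : Ideal R} [I.IsMaximal]
    [Finite (R ⧸ I)] (hQ : ∀ x y, polar Q x y ∈ I) (h2 : (2 : R) ∈ I) {x : M} (hx : Q x ∉ I) :
    Function.Surjective (Q.toAddMonoidHomQuotient I hQ) := by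
  let := Ideal.Quotient.field I
  have : CharP (R ⧸ I) 2 := CharTwo.of_one_ne_zero_of_two_eq_zero one_ne_zero
    (by rw [← map_ofNat (Ideal.Quotient.mk I) 2]; exact Ideal.Quotient.eq_zero_iff_mem.2 h2)
  have hx' : Ideal.Quotient.mk I (Q x) ≠ 0 := mt Ideal.Quotient.eq_zero_iff_mem.1 hx
  intro z
  obtain ⟨w, hw⟩ := surjective_frobenius (R ⧸ I) 2 (z / Ideal.Quotient.mk I (Q x))
  obtain ⟨e, rfl⟩ := Ideal.Quotient.mk_surjective w
  refine ⟨e • x, ?_⟩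
  rw [frobenius_def] at hw
  rw [toAddMonoidHomQuotient_apply, QuadraticMap.map_smul, smul_eq_mul, map_mul, map_mul,
    ← pow_two, hw, div_mul_cancel₀ _ hx']

end QuadraticMap

namespace FractionalIdeal

variable {R K : Type*} [CommRing R] [Field K] [Algebra R K]
  [IsFractionRing R K] {𝔞 : FractionalIdeal R⁰ K} {𝔭 : Ideal R}

theorem algebraMap_mem_coeIdeal_iff {x : R} :
    algebraMap R K x ∈ (𝔭 : FractionalIdeal R⁰ K) ↔ x ∈ 𝔭 :=
  ⟨fun h => by
    obtain ⟨y, hy, hxy⟩ := (mem_coeIdeal R⁰).1 h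
    exact IsFractionRing.injective R K hxy ▸ hy,
  mem_coeIdeal_of_mem R⁰⟩

theorem exists_mem_inv_mul_notMem [IsDedekindDomain R] (h𝔞 : 𝔞 ≠ 0) {a : K} (ha : a ∉ 𝔞 * 𝔭) :
    ∃ u ∈ 𝔞⁻¹, u * a ∉ (𝔭 : FractionalIdeal R⁰ K) := by
  by_contra! h
  have hle : spanSingleton R⁰ a * 𝔞⁻¹ ≤ 𝔭 := fun x hx => by
    obtain ⟨u, hu, rfl⟩ := mem_singleton_mul.1 hx
    exact mul_comm a u ▸ h u hu
  have hsub : spanSingleton R⁰ a ≤ 𝔞 * 𝔭 := calc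
    spanSingleton R⁰ a = spanSingleton R⁰ a * 𝔞⁻¹ * 𝔞 := by
      rw [mul_assoc, inv_mul_cancel₀ h𝔞, mul_one]
    _ ≤ 𝔭 * 𝔞 := mul_le_mul_left hle 𝔞
    _ = 𝔞 * 𝔭 := mul_comm _ _
  exact ha (hsub (mem_spanSingleton_self R⁰ a))

theorem mul_mem_coeIdeal_iff [IsDedekindDomain R] [𝔭.IsMaximal] (h𝔞 : 𝔞 ≠ 0) {a u : K}
    (ha : a ∈ 𝔞) (hu : u ∈ 𝔞⁻¹) (hua : u * a ∉ (𝔭 : FractionalIdeal R⁰ K)) {m : K} (hm : m ∈ 𝔞) :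
    u * m ∈ (𝔭 : FractionalIdeal R⁰ K) ↔ m ∈ 𝔞 * 𝔭 := by
  constructor
  · intro hum
    obtain ⟨t, ht⟩ := (mem_one_iff R⁰).1 <| (mem_inv_iff h𝔞).1 hu a ha
    have ht𝔭 : t ∉ 𝔭 := fun h => hua (ht ▸ mem_coeIdeal_of_mem R⁰ h)
    obtain ⟨s, c, hc, hsc⟩ := Ideal.IsMaximal.exists_inv ‹_› ht𝔭
    -- `t = u a` is invertible mod `𝔭`: `t s + c = 1` with `c ∈ 𝔭` splits `m` as below
    have hm_eq : m = u * m * (algebraMap R K s * a) + m * algebraMap R K c := by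
      have := congrArg (m * algebraMap R K ·) hsc
      simp only [map_add, map_mul, map_one, ht] at this
      linear_combination -this
    have hsa : algebraMap R K s * a ∈ 𝔞 := Algebra.smul_def s a ▸ Submodule.smul_mem _ s ha
    rw [hm_eq, mul_comm 𝔞]
    exact Submodule.add_mem _ (mul_mem_mul hum hsa)
      (mul_comm 𝔞 _ ▸ mul_mem_mul hm (mem_coeIdeal_of_mem R⁰ hc))
  · intro hm𝔭
    rw [← one_mul (𝔭 : FractionalIdeal R⁰ K), ← inv_mul_cancel₀ h𝔞, mul_assoc]
    exact mul_mem_mul hu hm𝔭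

end FractionalIdeal

section

variable {R K : Type*} [CommRing R] [Field K] [Algebra R K] [FaithfulSMul R K]
  [AddCommGroup V] [Module K V] [Module R V] [IsScalarTower R K V]

noncomputable def LinearMap.integralRestriction (H : V →ₗ[K] V →ₗ[K] K) (L : Submodule R V)
    (c : K) (hc : ∀ x ∈ L, ∀ y ∈ L, c * H x y ∈ (1 : Submodule R K)) : L →ₗ[R] L →ₗ[R] R :=
  LinearMap.codRestrict₂ (((H.restrictScalars₁₂ R R).domRestrict₁₂ L L).compr₂
    (LinearMap.mulLeft R c)) (Algebra.linearMap R K) (FaithfulSMul.algebraMap_injective R K)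
    (fun x y => Submodule.one_eq_range (R := R) (A := K) ▸ hc x x.2 y y.2)

@[simp]
theorem LinearMap.algebraMap_integralRestriction (H : V →ₗ[K] V →ₗ[K] K) (L : Submodule R V)
    (c : K) (hc : ∀ x ∈ L, ∀ y ∈ L, c * H x y ∈ (1 : Submodule R K)) (x y : L) :
    algebraMap R K (H.integralRestriction L c hc x y) = c * H x y :=
  LinearMap.codRestrict₂_apply _ (Algebra.linearMap R K) _ _ x y

theorem LinearMap.integralRestriction_comm {H : V →ₗ[K] V →ₗ[K] K} (hH : ∀ x y, H x y = H y x)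
    {L : Submodule R V} {c : K} (hc : ∀ x ∈ L, ∀ y ∈ L, c * H x y ∈ (1 : Submodule R K))
    (x y : L) : H.integralRestriction L c hc x y = H.integralRestriction L c hc y x :=
  FaithfulSMul.algebraMap_injective R K (by simp [hH])

end

/-- The isomorphism `L/L_{𝔞-even at 𝔭} ≅ 𝓞_F/𝔭` is expressed by a surjective additive map
`L → 𝓞_F/𝔭` whose kernel is `{x | H(x,x) ∈ 𝔞𝔭}`, which is `L_{𝔞-even at 𝔭}` as `ord_𝔭(2) = 1`. -/
theorem index_of_even_sublattice_general [Field F] [NumberField F] [AddCommGroup V] [Module F V]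
    [Module (𝓞 F) V] [IsScalarTower (𝓞 F) F V]
    (H : V →ₗ[F] V →ₗ[F] F) (hsymm : ∀ x y, H x y = H y x)
    (𝔞 : FractionalIdeal (𝓞 F)⁰ F) (h𝔞 : 𝔞 ≠ 0)
    (𝔭 : Ideal (𝓞 F)) (h𝔭 : 𝔭 ≠ ⊥) (h𝔭p : 𝔭.IsPrime)
    -- ord_𝔭(2) = 1
    (h2mem : (2 : 𝓞 F) ∈ 𝔭)
    (L : Submodule (𝓞 F) V)
    (hval : ∀ x ∈ L, ∀ y ∈ L, H x y ∈ (𝔞 : Submodule (𝓞 F) F))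
    -- L is not 𝔞-even at 𝔭
    (hnoteven : ∃ x ∈ L,
      H x x ∉ ((𝔞 * (𝔭 : FractionalIdeal (𝓞 F)⁰ F)) : Submodule (𝓞 F) F)) :
    ∃ φ : L →+ (𝓞 F ⧸ 𝔭), Function.Surjective φ ∧
      ∀ x : L, (φ x = 0 ↔
        H (x : V) (x : V) ∈ ((𝔞 * (𝔭 : FractionalIdeal (𝓞 F)⁰ F)) : Submodule (𝓞 F) F)) := by
  rw [← FractionalIdeal.coe_mul] at hnoteven ⊢
  obtain ⟨x₀, hx₀L, hx₀⟩ := hnoteven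
  have := h𝔭p.isMaximal h𝔭
  have := Ideal.finiteQuotientOfFreeOfNeBot 𝔭 h𝔭
  obtain ⟨u, hu, hux₀⟩ := FractionalIdeal.exists_mem_inv_mul_notMem h𝔞 hx₀
  have hintegral : ∀ x ∈ L, ∀ y ∈ L, u * H x y ∈ (1 : Submodule (𝓞 F) F) := fun x hx y hy =>
    FractionalIdeal.coe_one (S := (𝓞 F)⁰) (P := F) ▸
      (FractionalIdeal.mem_inv_iff h𝔞).1 hu _ (hval x hx y hy)
  set B := H.integralRestriction L u hintegral
  set Q := LinearMap.BilinMap.toQuadraticMap B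
  have hpolar : ∀ x y, QuadraticMap.polar Q x y ∈ 𝔭 := fun x y => by
    rw [LinearMap.BilinMap.polar_toQuadraticMap,
      LinearMap.integralRestriction_comm hsymm hintegral y x, ← two_mul]
    exact Ideal.mul_mem_right _ _ h2mem
  have hker : ∀ x : L, Q x ∈ 𝔭 ↔ H x x ∈ 𝔞 * (𝔭 : FractionalIdeal (𝓞 F)⁰ F) := fun x => by
    rw [LinearMap.BilinMap.toQuadraticMap_apply,
      ← FractionalIdeal.algebraMap_mem_coeIdeal_iff (K := F),
      LinearMap.algebraMap_integralRestriction]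
    exact FractionalIdeal.mul_mem_coeIdeal_iff h𝔞 (hval _ hx₀L _ hx₀L) hu hux₀ (hval _ x.2 _ x.2)
  refine ⟨Q.toAddMonoidHomQuotient 𝔭 hpolar,
    Q.toAddMonoidHomQuotient_surjective hpolar h2mem (x := ⟨x₀, hx₀L⟩) ((hker _).not.2 hx₀),
    fun x => ?_⟩
  rw [QuadraticMap.toAddMonoidHomQuotient_apply, Ideal.Quotient.eq_zero_iff_mem]
  exact hker x

/-- if `L` is `𝔞`-valued but not `𝔞`-even at a prime `𝔭` with
`ord_𝔭(2) = 1`, then `L/L_{𝔞-even at 𝔭} ≅ 𝓞_F/𝔭` as abelian groups.  (Since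
`ord_𝔭(2) = 1`, an element `x ∈ L` lies in `L_{𝔞-even at 𝔭}` iff `H(x,x) ∈ 𝔞𝔭`.)
We express the isomorphism by a surjective additive map `L → 𝓞_F/𝔭` whose kernel is
exactly the `𝔞`-even-at-`𝔭` sublattice. -/
theorem index_of_even_sublattice [Field F] [NumberField F] [AddCommGroup V] [Module F V]
    [Module (𝓞 F) V] [IsScalarTower (𝓞 F) F V]
    (H : V →ₗ[F] V →ₗ[F] F) (hsymm : ∀ x y, H x y = H y x)
    (hnd : ∀ v : V, (∀ w : V, H v w = 0) → v = 0)
    (𝔞 : FractionalIdeal (𝓞 F)⁰ F) (h𝔞 : 𝔞 ≠ 0)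
    (𝔭 : Ideal (𝓞 F)) (h𝔭 : 𝔭 ≠ ⊥) (h𝔭p : 𝔭.IsPrime)
    -- ord_𝔭(2) = 1
    (h2mem : (2 : 𝓞 F) ∈ 𝔭) (h2sq : (2 : 𝓞 F) ∉ 𝔭 ^ 2)
    (L : Submodule (𝓞 F) V) (hL : IsLat L)
    (hval : ∀ x ∈ L, ∀ y ∈ L, H x y ∈ (𝔞 : Submodule (𝓞 F) F))
    -- L is not 𝔞-even at 𝔭
    (hnoteven : ∃ x ∈ L,
      H x x ∉ ((𝔞 * (𝔭 : FractionalIdeal (𝓞 F)⁰ F)) : Submodule (𝓞 F) F)) :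
    ∃ φ : L →+ (𝓞 F ⧸ 𝔭), Function.Surjective φ ∧
      ∀ x : L, (φ x = 0 ↔
        H (x : V) (x : V) ∈ ((𝔞 * (𝔭 : FractionalIdeal (𝓞 F)⁰ F)) : Submodule (𝓞 F) F)) :=
  index_of_even_sublattice_general H hsymm 𝔞 h𝔞 𝔭 h𝔭 h𝔭p h2mem L hval hnoteven
end
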